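/- Let ψ: O_q(G(k,n)) → O_q(G(n−k,n)) be the isomorphism with ψ([I]) = [w_0(Î)] for every quantum Plücker coordinate [I], where Î := {1,…,n}∖I and w_0 is the longest element of the symmetric group S_n (so w_0(i) = n+1−i). Then for each i = 1,…,n, as derivations of O_q(G(n−k,n)): ψ ∘ D_i ∘ ψ^{−1} = (1/(n−k))·(Σ_{j=1}^n D̄_j) − D̄_{w_0(i)}. -/

import Mathlib

noncomputable section

open scoped BigOperators

/-- Defining relations of the algebra of `m × n` quantum matrices. -/
inductive QMatRel (K : Type*) [Field K] (q : K) (m n : ℕ) :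
    FreeAlgebra K (Fin m × Fin n) → FreeAlgebra K (Fin m × Fin n) → Prop
  | row : ∀ (i : Fin m) (j l : Fin n), j < l →
      QMatRel K q m n (FreeAlgebra.ι K (i, j) * FreeAlgebra.ι K (i, l))
        (q • (FreeAlgebra.ι K (i, l) * FreeAlgebra.ι K (i, j)))
  | col : ∀ (i k : Fin m) (j : Fin n), i < k →
      QMatRel K q m n (FreeAlgebra.ι K (i, j) * FreeAlgebra.ι K (k, j))
        (q • (FreeAlgebra.ι K (k, j) * FreeAlgebra.ι K (i, j)))
  | commute : ∀ (i k : Fin m) (j l : Fin n), k < i → j < l →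
      QMatRel K q m n (FreeAlgebra.ι K (i, j) * FreeAlgebra.ι K (k, l))
        (FreeAlgebra.ι K (k, l) * FreeAlgebra.ι K (i, j))
  | quantum : ∀ (i k : Fin m) (j l : Fin n), i < k → j < l →
      QMatRel K q m n (FreeAlgebra.ι K (i, j) * FreeAlgebra.ι K (k, l))
        (FreeAlgebra.ι K (k, l) * FreeAlgebra.ι K (i, j)
          + (q - q⁻¹) • (FreeAlgebra.ι K (i, l) * FreeAlgebra.ι K (k, j)))

/-- The algebra `O_q(M(m,n))` of `m × n` quantum matrices. -/
abbrev QMat (K : Type*) [Field K] (q : K) (m n : ℕ) : Type _ :=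
  RingQuot (QMatRel K q m n)

variable {K : Type*} [Field K]

/-- The generator `x_{ij}` of `O_q(M(m,n))`. -/
def qmX (q : K) {m n : ℕ} (i : Fin m) (j : Fin n) : QMat K q m n :=
  RingQuot.mkAlgHom K (QMatRel K q m n) (FreeAlgebra.ι K (i, j))

/-- The number of inversions (the length) of a permutation of `Fin t`. -/
def invCount {t : ℕ} (σ : Equiv.Perm (Fin t)) : ℕ :=
  (Finset.univ.filter fun p : Fin t × Fin t => p.1 < p.2 ∧ σ p.2 < σ p.1).card

/-- The quantum minor, on rows `I` and columns `J`, of a matrix `x` of elements of an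
arbitrary algebra: `Σ_σ (-q)^{ℓ(σ)} x_{i₁ j_{σ(1)}} ⋯ x_{i_t j_{σ(t)}}`. -/
def minorOf (q : K) {A : Type*} [Ring A] [Algebra K A] {m n t : ℕ}
    (x : Fin m → Fin n → A) (I : Finset (Fin m)) (J : Finset (Fin n))
    (hI : I.card = t) (hJ : J.card = t) : A :=
  ∑ σ : Equiv.Perm (Fin t),
    ((-q) ^ invCount σ) •
      (List.ofFn fun r : Fin t =>
        x (I.orderEmbOfFin hI r) (J.orderEmbOfFin hJ (σ r))).prod

/-- The quantum minor `[I|J]` of `O_q(M(m,n))`. -/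
def qMinor (q : K) {m n t : ℕ} (I : Finset (Fin m)) (J : Finset (Fin n))
    (hI : I.card = t) (hJ : J.card = t) : QMat K q m n :=
  minorOf q (qmX q) I J hI hJ

/-- The quantum grassmannian `O_q(G(k,n))`: the subalgebra of `O_q(M(k,n))` generated by the
`k × k` quantum minors (the quantum Plücker coordinates). -/
def qGrass (q : K) (k n : ℕ) : Subalgebra K (QMat K q k n) :=
  Algebra.adjoin K
    {x | ∃ (J : Finset (Fin n)) (hJ : J.card = k),
      x = qMinor q (Finset.univ : Finset (Fin k)) J (Finset.card_fin k) hJ}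

/-- The quantum Plücker coordinate `[J]`, as an element of `O_q(G(k,n))`. -/
def pluck (q : K) {k n : ℕ} (J : Finset (Fin n)) (hJ : J.card = k) : qGrass q k n :=
  ⟨qMinor q Finset.univ J (Finset.card_fin k) hJ, Algebra.subset_adjoin ⟨J, hJ, rfl⟩⟩

/-- A `K`-linear map is a derivation if it satisfies the Leibniz rule. -/
def IsDeriv {A : Type*} [Ring A] [Algebra K A] (D : A →ₗ[K] A) : Prop :=
  ∀ a b : A, D (a * b) = a * D b + D a * b

/-- The index set `{1, …, k}` (`0`-based: `{0, …, k-1}`) inside `{1, …, n}`. -/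
def uSet (k n : ℕ) (h : k ≤ n) : Finset (Fin n) :=
  Finset.image (Fin.castLE h) Finset.univ

lemma uSet_card (k n : ℕ) (h : k ≤ n) : (uSet k n h).card = k := by
  rw [uSet, Finset.card_image_of_injective _ (Fin.castLE_injective h)]
  exact Finset.card_fin k

/-- The index set `{n-k+1, …, n}` (`0`-based: `{n-k, …, n-1}`). -/
def wSet (k n : ℕ) (h : k ≤ n) : Finset (Fin n) :=
  Finset.image (fun r : Fin k => (⟨n - k + (r : ℕ), by have := r.isLt; omega⟩ : Fin n))
    Finset.univ

lemma wSet_card (k n : ℕ) (h : k ≤ n) : (wSet k n h).card = k := by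
  rw [wSet, Finset.card_image_of_injective]
  · exact Finset.card_fin k
  · intro a b hab
    have h' := congrArg Fin.val hab
    simp only [] at h'
    exact Fin.val_injective (by omega)

/-- The leftmost quantum Plücker coordinate `[u] = [1,…,k]`. -/
def pluckU (q : K) (k n : ℕ) (h : k ≤ n) : qGrass q k n :=
  pluck q (uSet k n h) (uSet_card k n h)

/-- The rightmost quantum Plücker coordinate `[w] = [n-k+1,…,n]`. -/
def pluckW (q : K) (k n : ℕ) (h : k ≤ n) : qGrass q k n :=
  pluck q (wSet k n h) (wSet_card k n h)

/-- The index type for quantum Plücker coordinates: `k`-element subsets of `{1,…,n}`. -/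
abbrev PluckIdx (k n : ℕ) : Type _ := {J : Finset (Fin n) // J.card = k}

/-- The standard partial order on quantum Plücker coordinates:
`[i₁<…<i_k] ≤ [j₁<…<j_k]` iff `i_l ≤ j_l` for all `l`. -/
def stdLE {k n : ℕ} (A B : PluckIdx k n) : Prop :=
  ∀ r : Fin k, A.1.orderEmbOfFin A.2 r ≤ B.1.orderEmbOfFin B.2 r

/-- The standard strict order on quantum Plücker coordinates. -/
def stdLT {k n : ℕ} (A B : PluckIdx k n) : Prop :=
  stdLE A B ∧ A ≠ B

/-- A list of Plücker indices is standard if it is nondecreasing in the standard order. -/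
def isStd {k n : ℕ} (L : List (PluckIdx k n)) : Prop :=
  L.Chain' stdLE

/-- The monomial in the quantum Plücker coordinates given by a list of indices. -/
def monOf (q : K) {k n : ℕ} (L : List (PluckIdx k n)) : qGrass q k n :=
  (L.map fun J => pluck q J.1 J.2).prod

/-- The degree-`d` homogeneous component of `O_q(G(k,n))`: the span of the products of `d`
quantum Plücker coordinates. -/
def grassDeg (q : K) (k n d : ℕ) : Submodule K (qGrass q k n) :=
  Submodule.span K {x | ∃ L : List (PluckIdx k n), L.length = d ∧ x = monOf q L}

/-- `d(I) = #(I \ (I ∩ u))`. -/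
def dCols {k n : ℕ} (h : k ≤ n) (J : PluckIdx k n) : ℕ := (J.1 \ uSet k n h).card

/-- `[u]` as a Plücker index. -/
def uElt (k n : ℕ) (h : k ≤ n) : PluckIdx k n := ⟨uSet k n h, uSet_card k n h⟩

/-- `[w]` as a Plücker index. -/
def wElt (k n : ℕ) (h : k ≤ n) : PluckIdx k n := ⟨wSet k n h, wSet_card k n h⟩

/-- The `K`-module of `K`-linear derivations of `A`. -/
def DerSub (K : Type*) [Field K] (A : Type*) [Ring A] [Algebra K A] :
    Submodule K (A →ₗ[K] A) where
  carrier := {D | IsDeriv D}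
  zero_mem' := by intro a b; simp
  add_mem' := by
    intro D E hD hE a b
    simp only [LinearMap.add_apply, hD a b, hE a b, mul_add, add_mul]
    abel
  smul_mem' := by
    intro c D hD a b
    simp only [LinearMap.smul_apply, hD a b, smul_add, mul_smul_comm, smul_mul_assoc]

/-- The submodule of inner derivations `ad_z : a ↦ za - az` inside the module of
derivations of `A`. -/
def InnDerSub (K : Type*) [Field K] (A : Type*) [Ring A] [Algebra K A] :
    Submodule K (DerSub K A) where
  carrier := {D | ∃ z : A, ∀ x : A, (D : A →ₗ[K] A) x = z * x - x * z}
  zero_mem' := ⟨0, by simp⟩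
  add_mem' := by
    rintro D E ⟨y, hy⟩ ⟨z, hz⟩
    refine ⟨y + z, fun x => ?_⟩
    simp only [Submodule.coe_add, LinearMap.add_apply, hy x, hz x, add_mul, mul_add]
    abel
  smul_mem' := by
    rintro c D ⟨z, hz⟩
    refine ⟨c • z, fun x => ?_⟩
    simp only [Submodule.coe_smul, LinearMap.smul_apply, hz x, smul_sub, smul_mul_assoc,
      mul_smul_comm]

/-!
Both sides are derivations of `O_q(G(n-k,n))`, so it suffices to compare them on the quantum
Plücker coordinates, which generate it. For a coordinate `[J]` there, `ψ⁻¹[J] = [I]` with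
`I = (w₀ J)ᶜ`, and `i ∈ I` iff `w₀ i ∉ J`; on the other side `Σ_j D̄_j [J] = (n - k)[J]`. So both
sides send `[J]` to `0` if `w₀ i ∈ J` and to `[J]` otherwise.
-/

namespace IsDeriv

variable {A : Type*} [Ring A] [Algebra K A] {D E : A →ₗ[K] A}

lemma map_one (hD : IsDeriv D) : D 1 = 0 := by
  simpa using hD 1 1

lemma map_algebraMap (hD : IsDeriv D) (c : K) : D (algebraMap K A c) = 0 := by
  rw [Algebra.algebraMap_eq_smul_one, map_smul, hD.map_one, smul_zero]

def eqLocus (hD : IsDeriv D) (hE : IsDeriv E) : Subalgebra K A where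
  carrier := {a | D a = E a}
  mul_mem' {a b} ha hb := by
    simp only [Set.mem_ofPred_eq] at ha hb ⊢
    rw [hD, hE, ha, hb]
  add_mem' {a b} ha hb := by
    simp only [Set.mem_ofPred_eq] at ha hb ⊢
    rw [map_add, map_add, ha, hb]
  algebraMap_mem' c := by
    simp only [Set.mem_ofPred_eq, hD.map_algebraMap, hE.map_algebraMap]

lemma ext_of_adjoin_eq_top (hD : IsDeriv D) (hE : IsDeriv E) {s : Set A}
    (hs : Algebra.adjoin K s = ⊤) (h : Set.EqOn D E s) : D = E := by
  have hle : Algebra.adjoin K s ≤ eqLocus hD hE := Algebra.adjoin_le h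
  rw [hs] at hle
  exact LinearMap.ext fun a => hle Algebra.mem_top

lemma sub (hD : IsDeriv D) (hE : IsDeriv E) : IsDeriv (D - E) :=
  (DerSub K A).sub_mem hD hE

lemma smul (hD : IsDeriv D) (c : K) : IsDeriv (c • D) :=
  (DerSub K A).smul_mem c hD

lemma sum {ι : Type*} (s : Finset ι) {F : ι → A →ₗ[K] A} (hF : ∀ j ∈ s, IsDeriv (F j)) :
    IsDeriv (∑ j ∈ s, F j) :=
  (DerSub K A).sum_mem hF

/- Stated pointwise because on `qGrass` the sum and difference of linear maps cannot be
elaborated (instance unification through `RingQuot` fails); here they are formed over a general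
ring `A`. -/
lemma apply_eq_smul_sum_sub_of_adjoin_eq_top {ι : Type*} [Fintype ι] {F : ι → A →ₗ[K] A}
    (hD : IsDeriv D) (hF : ∀ j, IsDeriv (F j)) (hE : IsDeriv E) (c : K) {s : Set A}
    (hs : Algebra.adjoin K s = ⊤) (h : ∀ a ∈ s, D a = c • ∑ j, F j a - E a) (x : A) :
    D x = c • ∑ j, F j x - E x := by
  have hrhs := ((IsDeriv.sum Finset.univ fun j _ => hF j).smul c).sub hE
  have hDE := hD.ext_of_adjoin_eq_top hrhs hs fun a ha => by simpa using h a ha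
  simpa using LinearMap.congr_fun hDE x

lemma conj {B : Type*} [Ring B] [Algebra K B] (hD : IsDeriv D) (e : A ≃ₐ[K] B) :
    IsDeriv (e.toLinearMap ∘ₗ D ∘ₗ e.symm.toLinearMap) := by
  intro a b
  simp only [LinearMap.coe_comp, Function.comp_apply, AlgEquiv.toLinearMap_apply, map_mul,
    hD (e.symm a), map_add, AlgEquiv.apply_symm_apply]

end IsDeriv

lemma adjoin_pluck_eq_top (q : K) (k n : ℕ) :
    Algebra.adjoin K (Set.range fun J : PluckIdx k n => pluck q J.1 J.2) = ⊤ := by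
  have hgen : (Set.range fun J : PluckIdx k n => pluck q J.1 J.2) =
      ((↑) : qGrass q k n → QMat K q k n) ⁻¹' {x | ∃ (J : Finset (Fin n)) (hJ : J.card = k),
        x = qMinor q (Finset.univ : Finset (Fin k)) J (Finset.card_fin k) hJ} := by
    ext x
    constructor
    · rintro ⟨J, rfl⟩
      exact ⟨J.1, J.2, rfl⟩
    · rintro ⟨J, hJ, hx⟩
      exact ⟨⟨J, hJ⟩, Subtype.ext hx.symm⟩
  rw [hgen]
  exact Algebra.adjoin_adjoin_coe_preimage

lemma sum_colDeriv_pluck {q : K} {k n : ℕ} (Dc : Fin n → (qGrass q k n →ₗ[K] qGrass q k n))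
    (hDc : ∀ (j : Fin n) (J : Finset (Fin n)) (hJ : J.card = k),
      Dc j (pluck q J hJ) = if j ∈ J then pluck q J hJ else 0)
    (J : Finset (Fin n)) (hJ : J.card = k) :
    ∑ j, Dc j (pluck q J hJ) = k • pluck q J hJ := by
  simp only [hDc, Finset.sum_ite_mem, Finset.univ_inter, Finset.sum_const, hJ]

lemma card_compl_image_rev {n k : ℕ} (hkn : k ≤ n) {J : Finset (Fin n)} (hJ : J.card = n - k) :
    (J.image Fin.rev)ᶜ.card = k := by
  rw [Finset.card_compl, Finset.card_image_of_injective _ Fin.rev_injective, hJ,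
    Fintype.card_fin]
  omega

lemma image_rev_compl_compl_image_rev {n : ℕ} (J : Finset (Fin n)) :
    ((J.image Fin.rev)ᶜᶜ).image Fin.rev = J := by
  rw [compl_compl, Finset.image_image, Fin.rev_involutive.comp_self, Finset.image_id]

lemma mem_compl_image_rev {n : ℕ} {J : Finset (Fin n)} {i : Fin n} :
    i ∈ (J.image Fin.rev)ᶜ ↔ Fin.rev i ∉ J := by
  simp [Fin.rev_eq_iff]

section ComplRev

variable {q : K} {k n : ℕ} {ψ : qGrass q k n ≃ₐ[K] qGrass q (n - k) n}

lemma apply_pluck_compl_image_rev (hkn : k ≤ n)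
    (hψ : ∀ (I : Finset (Fin n)) (hI : I.card = k) (hIc : (Finset.image Fin.rev Iᶜ).card = n - k),
      ψ (pluck q I hI) = pluck q (Finset.image Fin.rev Iᶜ) hIc)
    {J : Finset (Fin n)} (hJ : J.card = n - k) :
    ψ (pluck q (J.image Fin.rev)ᶜ (card_compl_image_rev hkn hJ)) = pluck q J hJ := by
  rw [hψ _ _ (by rwa [image_rev_compl_compl_image_rev])]
  simp only [image_rev_compl_compl_image_rev]

lemma symm_apply_pluck (hkn : k ≤ n)
    (hψ : ∀ (I : Finset (Fin n)) (hI : I.card = k) (hIc : (Finset.image Fin.rev Iᶜ).card = n - k),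
      ψ (pluck q I hI) = pluck q (Finset.image Fin.rev Iᶜ) hIc)
    {J : Finset (Fin n)} (hJ : J.card = n - k) :
    ψ.symm (pluck q J hJ) = pluck q (J.image Fin.rev)ᶜ (card_compl_image_rev hkn hJ) :=
  ψ.symm_apply_eq.mpr (apply_pluck_compl_image_rev hkn hψ hJ).symm

end ComplRev

theorem stmt_5_general (K : Type*) [Field K] [CharZero K] (q : K)
    (k n : ℕ) (hkn : k + 2 ≤ n)
    (ψ : qGrass q k n ≃ₐ[K] qGrass q (n - k) n)
    (hψ : ∀ (I : Finset (Fin n)) (hI : I.card = k)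
        (hIc : (Finset.image Fin.rev Iᶜ).card = n - k),
      ψ (pluck q I hI) = pluck q (Finset.image Fin.rev Iᶜ) hIc)
    (D : Fin n → (qGrass q k n →ₗ[K] qGrass q k n))
    (hDder : ∀ i, IsDeriv (K := K) (A := qGrass q k n) (D i))
    (hD : ∀ (i : Fin n) (J : Finset (Fin n)) (hJ : J.card = k),
      D i (pluck q J hJ) = if i ∈ J then pluck q J hJ else 0)
    (Dbar : Fin n → (qGrass q (n - k) n →ₗ[K] qGrass q (n - k) n))
    (hDbarder : ∀ j, IsDeriv (K := K) (A := qGrass q (n - k) n) (Dbar j))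
    (hDbar : ∀ (j : Fin n) (J : Finset (Fin n)) (hJ : J.card = n - k),
      Dbar j (pluck q J hJ) = if j ∈ J then pluck q J hJ else 0) :
    ∀ (i : Fin n) (x : qGrass q (n - k) n),
      ψ (D i (ψ.symm x)) =
        (((n - k : ℕ) : K))⁻¹ • (∑ j, Dbar j x) - Dbar (Fin.rev i) x := by
  intro i
  have hnk : ((n - k : ℕ) : K) ≠ 0 := Nat.cast_ne_zero.mpr (by omega)
  refine ((hDder i).conj ψ).apply_eq_smul_sum_sub_of_adjoin_eq_top (A := qGrass q (n - k) n)
    hDbarder (hDbarder i.rev) _ (adjoin_pluck_eq_top q (n - k) n) ?_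
  rintro _ ⟨⟨J, hJ⟩, rfl⟩
  rw [sum_colDeriv_pluck Dbar hDbar, ← Nat.cast_smul_eq_nsmul K, smul_smul, inv_mul_cancel₀ hnk,
    one_smul, hDbar]
  simp only [LinearMap.coe_comp, Function.comp_apply, AlgEquiv.toLinearMap_apply,
    symm_apply_pluck (by omega) hψ, hD, mem_compl_image_rev]
  by_cases hiJ : i.rev ∈ J
  · rw [if_neg (not_not.mpr hiJ), if_pos hiJ, map_zero]
    exact (sub_self (pluck q J hJ)).symm
  · rw [if_pos hiJ, if_neg hiJ, apply_pluck_compl_image_rev (by omega) hψ hJ]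
    exact (sub_zero (pluck q J hJ)).symm

/-- Let `ψ : O_q(G(k,n)) → O_q(G(n-k,n))` be the isomorphism with
`ψ([I]) = [w₀(Î)]`, where `Î` is the complement of `I` and `w₀(i) = n+1-i` is the longest
element of `S_n` (in `0`-based indexing, `Fin.rev`). Then for each `i`, as derivations of
`O_q(G(n-k,n))`: `ψ ∘ D_i ∘ ψ⁻¹ = (1/(n-k))·(Σ_{j=1}^n D̄_j) - D̄_{w₀(i)}`. -/
theorem stmt_5 (K : Type*) [Field K] [CharZero K] (q : K) (hq0 : q ≠ 0)
    (hq : ∀ t : ℕ, t ≠ 0 → q ^ t ≠ 1)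
    (k n : ℕ) (hk : 2 ≤ k) (hkn : k + 2 ≤ n)
    (ψ : qGrass q k n ≃ₐ[K] qGrass q (n - k) n)
    (hψ : ∀ (I : Finset (Fin n)) (hI : I.card = k)
        (hIc : (Finset.image Fin.rev Iᶜ).card = n - k),
      ψ (pluck q I hI) = pluck q (Finset.image Fin.rev Iᶜ) hIc)
    (D : Fin n → (qGrass q k n →ₗ[K] qGrass q k n))
    (hDder : ∀ i, IsDeriv (K := K) (A := qGrass q k n) (D i))
    (hD : ∀ (i : Fin n) (J : Finset (Fin n)) (hJ : J.card = k),
      D i (pluck q J hJ) = if i ∈ J then pluck q J hJ else 0)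
    (Dbar : Fin n → (qGrass q (n - k) n →ₗ[K] qGrass q (n - k) n))
    (hDbarder : ∀ j, IsDeriv (K := K) (A := qGrass q (n - k) n) (Dbar j))
    (hDbar : ∀ (j : Fin n) (J : Finset (Fin n)) (hJ : J.card = n - k),
      Dbar j (pluck q J hJ) = if j ∈ J then pluck q J hJ else 0) :
    ∀ (i : Fin n) (x : qGrass q (n - k) n),
      ψ (D i (ψ.symm x)) =
        (((n - k : ℕ) : K))⁻¹ • (∑ j, Dbar j x) - Dbar (Fin.rev i) x :=
  stmt_5_general K q k n hkn ψ hψ D hDder hD Dbar hDbarder hDbar
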